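/- An order-enriched functor P : A → X is strongly order-solid if and only if P is order-solid (in the weighted-cocone sense) and order-faithful. -/

import Mathlib

/-!
A family is a cocone over a discrete diagram with the one-point weight, and a weighted cocone
over `F : D ⥤ A` with weight `W` is a family indexed by the elements of `W`, i.e. by
`Σ i, W (op i)`. Order-faithfulness of `P` is what lets a family of legs chosen in `A` over a
weighted cocone in `X` inherit monotonicity and naturality from its image under `P`, and it is
also what lets the order-`P`-epic condition be checked on `q` alone. Conversely, a strongly
order-solid `P` is order-faithful: for the universal extension `(α, q)` of `id : P a ⟶ P a`,
`r, s : a ⟶ b` factor as `α ≫ t` and `α ≫ t'` with `q ≫ P t = P r ≤ P s = q ≫ P t'`.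
-/

open CategoryTheory Opposite

universe w v₂ u₂ v u v' u'

/-- A `W`-weighted cocone over an order-enriched diagram `F : D ⥤ C` with weight
`W : Dᵒᵖ ⥤ Pos`: a natural transformation `W ⟶ C(F -, pt)`. -/
structure WeightedCocone {C : Type u} [Category.{v} C] [∀ a b : C, PartialOrder (a ⟶ b)]
    {D : Type u₂} [Category.{v₂} D] (W : Dᵒᵖ ⥤ PartOrd.{w}) (F : D ⥤ C) where
  pt : C
  leg : ∀ i : D, W.obj (op i) → (F.obj i ⟶ pt)
  leg_mono : ∀ i : D, Monotone (leg i)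
  leg_nat : ∀ {i j : D} (d : i ⟶ j) (v : W.obj (op j)),
    F.map d ≫ leg j v = leg i ((W.map d.op).hom.toFun v)

/-- A weighted cocone is a weighted colimit if it is universal among weighted cocones
and order-epic. -/
def IsWeightedColimit {C : Type u} [Category.{v} C] [∀ a b : C, PartialOrder (a ⟶ b)]
    {D : Type u₂} [Category.{v₂} D] {W : Dᵒᵖ ⥤ PartOrd.{w}} {F : D ⥤ C}
    (α : WeightedCocone W F) : Prop :=
  (∀ β : WeightedCocone W F, ∃! t : α.pt ⟶ β.pt, ∀ (i : D) (u : W.obj (op i)),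
    α.leg i u ≫ t = β.leg i u) ∧
  (∀ {z : C} (r s : α.pt ⟶ z),
    (∀ (i : D) (u : W.obj (op i)), α.leg i u ≫ r ≤ α.leg i u ≫ s) → r ≤ s)

/-- `(α, q)` is an order-universal `P`-extension of the weighted cocone `ξ` over `F ⋙ P`. -/
def IsOrderUniversalExtension {A : Type u} [Category.{v} A] [∀ a b : A, PartialOrder (a ⟶ b)]
    {X : Type u'} [Category.{v'} X] [∀ x y : X, PartialOrder (x ⟶ y)]
    (P : A ⥤ X) {D : Type u₂} [Category.{v₂} D] {W : Dᵒᵖ ⥤ PartOrd.{w}} {F : D ⥤ A}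
    (ξ : WeightedCocone W (F ⋙ P)) (α : WeightedCocone W F)
    (q : ξ.pt ⟶ P.obj α.pt) : Prop :=
  (∀ (i : D) (u : W.obj (op i)), P.map (α.leg i u) = ξ.leg i u ≫ q) ∧
  (∀ (β : WeightedCocone W F) (f : ξ.pt ⟶ P.obj β.pt),
    (∀ (i : D) (u : W.obj (op i)), P.map (β.leg i u) = ξ.leg i u ≫ f) →
    ∃! t : α.pt ⟶ β.pt,
      (∀ (i : D) (u : W.obj (op i)), α.leg i u ≫ t = β.leg i u) ∧ q ≫ P.map t = f) ∧
  (∀ {z : A} (r s : α.pt ⟶ z), q ≫ P.map r ≤ q ≫ P.map s →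
    (∀ (i : D) (u : W.obj (op i)), α.leg i u ≫ r ≤ α.leg i u ≫ s) → r ≤ s)

/-- `P` is order-faithful. -/
def OrderFaithful {A : Type u} [Category.{v} A] [∀ a b : A, PartialOrder (a ⟶ b)]
    {X : Type u'} [Category.{v'} X] [∀ x y : X, PartialOrder (x ⟶ y)]
    (P : A ⥤ X) : Prop :=
  ∀ {a b : A} (r s : a ⟶ b), P.map r ≤ P.map s → r ≤ s

/-- `P` is order-solid: every weighted cocone `ξ : W → X(P D -, x)`, for every
order-enriched diagram `F : D ⥤ A` and every weight `W : Dᵒᵖ ⥤ Pos`, admits an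
order-universal `P`-extension. -/
def OrderSolid {A : Type u} [Category.{v} A] [∀ a b : A, PartialOrder (a ⟶ b)]
    {X : Type u'} [Category.{v'} X] [∀ x y : X, PartialOrder (x ⟶ y)]
    (P : A ⥤ X) : Prop :=
  ∀ (D : Type w) [Category.{w} D] [∀ i j : D, PartialOrder (i ⟶ j)] (F : D ⥤ A),
    (∀ {i j : D} (d d' : i ⟶ j), d ≤ d' → F.map d ≤ F.map d') →
    ∀ (W : Dᵒᵖ ⥤ PartOrd.{w}),
      (∀ {i j : D} (d d' : i ⟶ j), d ≤ d' →
        ∀ v : W.obj (op j), (W.map d.op).hom.toFun v ≤ (W.map d'.op).hom.toFun v) →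
      ∀ ξ : WeightedCocone W (F ⋙ P),
        ∃ (α : WeightedCocone W F) (q : ξ.pt ⟶ P.obj α.pt),
          IsOrderUniversalExtension P ξ α q

/-- `P` is strongly order-solid: every (possibly large) family admits a universal
`P`-extension whose comparison morphism is order-`P`-epic. -/
def StronglyOrderSolid {A : Type u} [Category.{v} A] [∀ a b : A, PartialOrder (a ⟶ b)]
    {X : Type u'} [Category.{v'} X] [∀ x y : X, PartialOrder (x ⟶ y)]
    (P : A ⥤ X) : Prop :=
  ∀ {I : Type w} (Dfam : I → A) (x : X) (ξ : ∀ i, P.obj (Dfam i) ⟶ x),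
    ∃ (a : A) (α : ∀ i, Dfam i ⟶ a) (q : x ⟶ P.obj a),
      (∀ i, P.map (α i) = ξ i ≫ q) ∧
      (∀ (b : A) (β : ∀ i, Dfam i ⟶ b) (f : x ⟶ P.obj b),
        (∀ i, P.map (β i) = ξ i ≫ f) →
        ∃! t : a ⟶ b, (∀ i, α i ≫ t = β i) ∧ q ≫ P.map t = f) ∧
      (∀ {b : A} (r s : a ⟶ b), q ≫ P.map r ≤ q ≫ P.map s → r ≤ s)


instance {I : Type w} (i j : Discrete I) : PartialOrder (i ⟶ j) :=
  LinearOrder.ofSubsingleton.toPartialOrder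

def WeightedCocone.ofFamily {I : Type w} {C : Type u} [Category.{v} C]
    [∀ a b : C, PartialOrder (a ⟶ b)] (G : Discrete I ⥤ C) {b : C}
    (β : ∀ i, G.obj ⟨i⟩ ⟶ b) :
    WeightedCocone ((Functor.const (Discrete I)ᵒᵖ).obj (PartOrd.of PUnit.{w + 1})) G where
  pt := b
  leg i _ := β i.as
  leg_mono _ _ _ _ := le_rfl
  leg_nat := by
    rintro ⟨i⟩ ⟨j⟩ ⟨⟨h⟩⟩ _
    obtain rfl : i = j := h
    simp

section

variable {A : Type u} [Category.{v} A] [∀ a b : A, PartialOrder (a ⟶ b)]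
    {X : Type u'} [Category.{v'} X] [∀ x y : X, PartialOrder (x ⟶ y)] {P : A ⥤ X}

theorem OrderFaithful.map_injective (hP : OrderFaithful P) {a b : A} {r s : a ⟶ b}
    (h : P.map r = P.map s) : r = s :=
  le_antisymm (hP r s h.le) (hP s r h.ge)

theorem OrderFaithful.of_stronglyOrderSolid
    (compMonoA : ∀ {a b c : A} (f f' : a ⟶ b) (g g' : b ⟶ c),
      f ≤ f' → g ≤ g' → f ≫ g ≤ f' ≫ g')
    (hS : StronglyOrderSolid.{w} P) : OrderFaithful P := by
  intro a b r s hrs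
  obtain ⟨c, α, q, -, huniv, hepi⟩ :=
    hS (I := PUnit.{w + 1}) (fun _ => a) (P.obj a) (fun _ => 𝟙 _)
  obtain ⟨t, ⟨hαt, hqt⟩, -⟩ := huniv b (fun _ => r) (P.map r) (fun _ => by simp)
  obtain ⟨t', ⟨hαt', hqt'⟩, -⟩ := huniv b (fun _ => s) (P.map s) (fun _ => by simp)
  have htt' : t ≤ t' := hepi t t' (by rwa [hqt, hqt'])
  calc r = α .unit ≫ t := (hαt _).symm
    _ ≤ α .unit ≫ t' := compMonoA _ _ _ _ le_rfl htt'
    _ = s := hαt' _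

def WeightedCocone.liftOfOrderFaithful
    (compMonoX : ∀ {x y z : X} (f f' : x ⟶ y) (g g' : y ⟶ z),
      f ≤ f' → g ≤ g' → f ≫ g ≤ f' ≫ g')
    (hP : OrderFaithful P) {D : Type u₂} [Category.{v₂} D] {W : Dᵒᵖ ⥤ PartOrd.{w}}
    {F : D ⥤ A} (ξ : WeightedCocone W (F ⋙ P)) {a : A} (α : ∀ i, W.obj (op i) → (F.obj i ⟶ a))
    (q : ξ.pt ⟶ P.obj a) (hα : ∀ i u, P.map (α i u) = ξ.leg i u ≫ q) :
    WeightedCocone W F where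
  pt := a
  leg := α
  leg_mono i u u' huu' :=
    hP _ _ (by rw [hα, hα]; exact compMonoX _ _ _ _ (ξ.leg_mono i huu') le_rfl)
  leg_nat d v :=
    hP.map_injective (by rw [P.map_comp, hα, hα, ← ξ.leg_nat d v]; simp)

theorem OrderSolid.of_stronglyOrderSolid
    (compMonoX : ∀ {x y z : X} (f f' : x ⟶ y) (g g' : y ⟶ z),
      f ≤ f' → g ≤ g' → f ≫ g ≤ f' ≫ g')
    (hP : OrderFaithful P) (hS : StronglyOrderSolid.{w} P) : OrderSolid.{w} P := by
  intro D _ _ F _ W _ ξ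
  obtain ⟨a, α, q, hα, huniv, hepi⟩ :=
    hS (I := Σ i : D, W.obj (op i)) (fun p => F.obj p.1) ξ.pt (fun p => ξ.leg p.1 p.2)
  refine ⟨.liftOfOrderFaithful compMonoX hP ξ (fun i u => α ⟨i, u⟩) q (fun i u => hα ⟨i, u⟩),
    q, fun i u => hα ⟨i, u⟩, fun β f hf => ?_, fun r s hq _ => hepi r s hq⟩
  obtain ⟨t, ⟨hαt, hqt⟩, ht_unique⟩ :=
    huniv β.pt (fun p => β.leg p.1 p.2) f (fun p => hf p.1 p.2)
  exact ⟨t, ⟨fun i u => hαt ⟨i, u⟩, hqt⟩,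
    fun t' ⟨hαt', hqt'⟩ => ht_unique t' ⟨fun p => hαt' p.1 p.2, hqt'⟩⟩

theorem StronglyOrderSolid.of_orderSolid
    (compMonoX : ∀ {x y z : X} (f f' : x ⟶ y) (g g' : y ⟶ z),
      f ≤ f' → g ≤ g' → f ≫ g ≤ f' ≫ g')
    (hP : OrderFaithful P) (hsolid : OrderSolid.{w} P) : StronglyOrderSolid.{w} P := by
  intro I Dfam x ξ
  obtain ⟨α, q, hα, huniv, hepi⟩ :=
    hsolid (Discrete I) (Discrete.functor Dfam) (fun d d' _ => Subsingleton.elim d d' ▸ le_rfl)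
      _ (fun _ _ _ _ => le_rfl) (.ofFamily (Discrete.functor Dfam ⋙ P) ξ)
  refine ⟨α.pt, fun i => α.leg ⟨i⟩ .unit, q, fun i => hα ⟨i⟩ _, fun b β f hf => ?_,
    fun r s hq => hepi r s hq fun i u => hP _ _ ?_⟩
  · obtain ⟨t, ⟨hαt, hqt⟩, ht_unique⟩ := huniv (.ofFamily _ β) f (fun i _ => hf i.as)
    exact ⟨t, ⟨fun i => hαt ⟨i⟩ _, hqt⟩,
      fun t' ⟨hαt', hqt'⟩ => ht_unique t' ⟨fun i _ => hαt' i.as, hqt'⟩⟩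
  · simp only [P.map_comp, hα, Category.assoc]
    exact compMonoX _ _ _ _ le_rfl hq

end

/-- An order-enriched functor is strongly order-solid iff it is order-solid (in the
weighted-cocone sense) and order-faithful. -/
theorem stronglyOrderSolid_iff_orderSolid_and_orderFaithful
    {A : Type u} [Category.{v} A] [∀ a b : A, PartialOrder (a ⟶ b)]
    {X : Type u'} [Category.{v'} X] [∀ x y : X, PartialOrder (x ⟶ y)]
    (compMonoA : ∀ {a b c : A} (f f' : a ⟶ b) (g g' : b ⟶ c),
      f ≤ f' → g ≤ g' → f ≫ g ≤ f' ≫ g')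
    (compMonoX : ∀ {x y z : X} (f f' : x ⟶ y) (g g' : y ⟶ z),
      f ≤ f' → g ≤ g' → f ≫ g ≤ f' ≫ g')
    (P : A ⥤ X)
    (Pmono : ∀ {a b : A} (f g : a ⟶ b), f ≤ g → P.map f ≤ P.map g) :
    StronglyOrderSolid.{w} P ↔ (OrderSolid.{w} P ∧ OrderFaithful P) := by
  refine ⟨fun hS => ?_, fun ⟨hsolid, hP⟩ => StronglyOrderSolid.of_orderSolid compMonoX hP hsolid⟩
  have hP : OrderFaithful P := OrderFaithful.of_stronglyOrderSolid compMonoA hS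
  exact ⟨OrderSolid.of_stronglyOrderSolid compMonoX hP hS, hP⟩
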